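/- arXiv:2303.09629 — 4 statements merged into one kernel-verified Lean document; each statement's English description precedes it below -/
import Mathlib

section
/- For a sequence of episodes where episode k contributes v_k visits to a fixed state-action pair, with cumulative counts n_k = max(1, v_1 + ... + v_{k-1}) and under the doubling condition v_k ≤ n_k for every k, it holds that the sum over k = 1 to m of v_k / sqrt(n_k) is at most 3 * sqrt(n_{m+1}), where n_{m+1} = max(1, v_1 + ... + v_m). -/
/-! Since `v_k ≤ n_k`, each term `v_k / √n_k` is at most `3 (√(S_k + v_k) - √S_k)` for the partial
sums `S_k = v_1 + ⋯ + v_{k-1}`, and these bounds telescope to `3 √S_{m+1} ≤ 3 √n_{m+1}`. -/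

open Finset Real

/-- `√(s + v) - √s = v / (√(s + v) + √s)`, and the denominator is at most `2 √t + √t`. -/
theorem div_sqrt_le_three_mul_sqrt_add_sub_sqrt {s v t : ℝ} (hs : 0 ≤ s) (hv : 0 ≤ v)
    (hst : s ≤ t) (hvt : v ≤ t) : v / √t ≤ 3 * (√(s + v) - √s) := by
  have hgap : 0 ≤ √(s + v) - √s := sub_nonneg.mpr (sqrt_le_sqrt (by linarith))
  rcases (sqrt_nonneg t).eq_or_lt with ht | ht
  · rw [← ht, div_zero]
    positivity
  have hprod : (√(s + v) - √s) * (√(s + v) + √s) = v := by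
    rw [mul_comm, ← sq_sub_sq, sq_sqrt (by linarith), sq_sqrt hs, add_sub_cancel_left]
  have hsum : √(s + v) + √s ≤ 3 * √t := by
    have h2t : √(s + v) ≤ 2 * √t := by
      rw [show 2 * √t = √(2 ^ 2 * t) by
        rw [sqrt_mul (by positivity), sqrt_sq (by norm_num)]]
      exact sqrt_le_sqrt (by linarith)
    linarith [sqrt_le_sqrt hst]
  rw [div_le_iff₀ ht]
  calc v = (√(s + v) - √s) * (√(s + v) + √s) := hprod.symm
    _ ≤ (√(s + v) - √s) * (3 * √t) := mul_le_mul_of_nonneg_left hsum hgap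
    _ = 3 * (√(s + v) - √s) * √t := by ring

theorem sum_div_sqrt_max_one_sum_Ico_le (v : ℕ → ℝ) (hv : ∀ k, 0 ≤ v k) (m : ℕ)
    (hdbl : ∀ k ∈ Icc 1 m, v k ≤ max 1 (∑ i ∈ Ico 1 k, v i)) :
    ∑ k ∈ Icc 1 m, v k / √(max 1 (∑ i ∈ Ico 1 k, v i)) ≤ 3 * √(∑ i ∈ Icc 1 m, v i) := by
  set S : ℕ → ℝ := fun k ↦ ∑ i ∈ Ico 1 k, v i
  have hS_succ : ∀ k ∈ Icc 1 m, S (k + 1) = S k + v k := fun k hk ↦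
    sum_Ico_succ_top (mem_Icc.mp hk).1 v
  calc ∑ k ∈ Icc 1 m, v k / √(max 1 (S k))
      ≤ ∑ k ∈ Icc 1 m, 3 * (√(S (k + 1)) - √(S k)) := by
        refine sum_le_sum fun k hk ↦ ?_
        rw [hS_succ k hk]
        exact div_sqrt_le_three_mul_sqrt_add_sub_sqrt (sum_nonneg fun i _ ↦ hv i) (hv k)
          (le_max_right _ _) (hdbl k hk)
    _ = 3 * √(S (m + 1)) := by
        rw [← mul_sum, show Icc 1 m = Ico 1 (m + 1) from rfl,
          sum_Ico_sub (fun k ↦ √(S k)) (by omega)]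
        simp [S]

theorem stmt_0_general (m : ℕ) (v : ℕ → ℕ) (n : ℕ → ℕ)
    (hn : ∀ k, n k = max 1 (∑ i ∈ Finset.Ico 1 k, v i))
    (hdbl : ∀ k ∈ Finset.Icc 1 m, v k ≤ n k) :
    ∑ k ∈ Finset.Icc 1 m, (v k : ℝ) / Real.sqrt (n k) ≤ 3 * Real.sqrt (n (m + 1)) := by
  have hn_real : ∀ k, (n k : ℝ) = max 1 (∑ i ∈ Ico 1 k, (v i : ℝ)) := fun k ↦ by
    rw [hn k]
    push_cast
    rfl
  have hsum := sum_div_sqrt_max_one_sum_Ico_le (fun k ↦ (v k : ℝ)) (fun k ↦ (v k).cast_nonneg)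
    m fun k hk ↦ by simpa only [← hn_real] using (Nat.cast_le (α := ℝ)).mpr (hdbl k hk)
  simp only [← hn_real] at hsum
  calc ∑ k ∈ Icc 1 m, (v k : ℝ) / √(n k) ≤ 3 * √(∑ i ∈ Icc 1 m, (v i : ℝ)) := hsum
    _ ≤ 3 * √(n (m + 1)) := by
        rw [hn_real, show Ico 1 (m + 1) = Icc 1 m from rfl]
        gcongr
        exact le_max_right _ _

theorem stmt_0 (m : ℕ) (hm : 1 ≤ m) (v : ℕ → ℕ) (n : ℕ → ℕ)
    (hn : ∀ k, n k = max 1 (∑ i ∈ Finset.Ico 1 k, v i))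
    (hdbl : ∀ k ∈ Finset.Icc 1 m, v k ≤ n k) :
    ∑ k ∈ Finset.Icc 1 m, (v k : ℝ) / Real.sqrt (n k) ≤ 3 * Real.sqrt (n (m + 1)) :=
  stmt_0_general m v n hn hdbl
end

section
/- Under the same setup with cumulative counts n_k = max(1, v_1 + ... + v_{k-1}) and doubling condition v_k ≤ n_k for all k, the sum over k = 1 to m of v_k / n_k is at most 2 + 2 * log(n_{m+1}), where n_{m+1} = max(1, v_1 + ... + v_m) and log denotes the natural logarithm. -/
/-!
Telescope the potential `Φ(s) = 2 log (max 1 s) + 2·[s ≠ 0]` along the partial sums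
`s_k = v_1 + ⋯ + v_{k-1}`. Once `s_k ≥ 1` the doubling condition gives `v_k ≤ s_k`, and then
`v_k / s_k ≤ 2 v_k / (s_k + v_k) ≤ 2 log ((s_k + v_k) / s_k)`; the single step at which the
partial sums leave `0` has `v_k = n_k = 1` and is paid for by the jump of the indicator.
-/

open Finset Real

theorem div_le_two_mul_log_sub_log {a b : ℝ} (ha : 0 ≤ a) (hb : 0 < b) (hab : a ≤ b) :
    a / b ≤ 2 * (log (b + a) - log b) := by
  have hba : 0 < b + a := by linarith
  have hlog : 1 - ((b + a) / b)⁻¹ ≤ log (b + a) - log b := by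
    rw [← log_div hba.ne' hb.ne']
    exact one_sub_inv_le_log_of_pos (div_pos hba hb)
  have hfrac : a / b ≤ 2 * (1 - ((b + a) / b)⁻¹) := by
    rw [inv_div, div_le_iff₀ hb]
    field_simp
    nlinarith
  linarith

noncomputable def logPotential (s : ℕ) : ℝ :=
  2 * log (max 1 s : ℕ) + if s = 0 then 0 else 2

theorem logPotential_zero : logPotential 0 = 0 := by
  simp [logPotential]

theorem logPotential_le (s : ℕ) : logPotential s ≤ 2 + 2 * log (max 1 s : ℕ) := by
  unfold logPotential
  split_ifs <;> linarith

theorem div_le_logPotential_add_sub {s a : ℕ} (ha : a ≤ max 1 s) :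
    (a : ℝ) / (max 1 s : ℕ) ≤ logPotential (s + a) - logPotential s := by
  by_cases hs : s = 0
  · subst hs
    have ha1 : a ≤ 1 := by simpa using ha
    interval_cases a <;> simp [logPotential]
  · have hs1 : 1 ≤ s := Nat.one_le_iff_ne_zero.mpr hs
    rw [max_eq_right hs1] at ha ⊢
    simp only [logPotential, max_eq_right hs1, max_eq_right (hs1.trans (s.le_add_right a)), hs,
      show s + a ≠ 0 by omega, if_false]
    have := div_le_two_mul_log_sub_log (Nat.cast_nonneg a) (Nat.cast_pos.mpr (by omega))
      (Nat.cast_le.mpr ha)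
    push_cast
    linarith

theorem stmt_1_general (m : ℕ) (v : ℕ → ℕ) (n : ℕ → ℕ)
    (hn : ∀ k, n k = max 1 (∑ i ∈ Finset.Ico 1 k, v i))
    (hdbl : ∀ k ∈ Finset.Icc 1 m, v k ≤ n k) :
    ∑ k ∈ Finset.Icc 1 m, (v k : ℝ) / (n k : ℝ) ≤ 2 + 2 * Real.log (n (m + 1)) := by
  set S : ℕ → ℕ := fun k => ∑ i ∈ Ico 1 k, v i with hS
  have hS_succ : ∀ k, 1 ≤ k → S (k + 1) = S k + v k := fun k hk => sum_Ico_succ_top hk v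
  calc ∑ k ∈ Icc 1 m, (v k : ℝ) / (n k : ℝ)
      ≤ ∑ k ∈ Ico 1 (m + 1), (logPotential (S (k + 1)) - logPotential (S k)) := by
        rw [← Ico_add_one_right_eq_Icc]
        refine sum_le_sum fun k hk => ?_
        obtain ⟨hk1, hkm⟩ := mem_Ico.mp hk
        have hvk := hdbl k (mem_Icc.mpr ⟨hk1, by omega⟩)
        rw [hn] at hvk ⊢
        rw [hS_succ k hk1]
        exact div_le_logPotential_add_sub hvk
    _ = logPotential (S (m + 1)) - logPotential (S 1) :=
        sum_Ico_sub (fun k => logPotential (S k)) (by omega)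
    _ ≤ 2 + 2 * log (n (m + 1)) := by
        rw [hn, show S 1 = 0 by simp [hS], logPotential_zero, sub_zero]
        exact logPotential_le _

theorem stmt_1 (m : ℕ) (hm : 1 ≤ m) (v : ℕ → ℕ) (n : ℕ → ℕ)
    (hn : ∀ k, n k = max 1 (∑ i ∈ Finset.Ico 1 k, v i))
    (hdbl : ∀ k ∈ Finset.Icc 1 m, v k ≤ n k) :
    ∑ k ∈ Finset.Icc 1 m, (v k : ℝ) / (n k : ℝ) ≤ 2 + 2 * Real.log (n (m + 1)) :=
  stmt_1_general m v n hn hdbl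
end

section
/- If for each episode k and each state-action pair the per-episode visit counts satisfy the doubling-stop rule (each episode ends the first time some pair's within-episode count v_k reaches its prior count n_k, with n_k ≥ 1), then the total number of episodes m over a horizon of T steps satisfies m ≤ C·A·log₂(8T/(C·A)), where C·A is the number of state-action pairs. -/
/-!
Charge every episode to a pair whose count it doubles. Each charge to a pair `p` at least doubles
its running count (or raises it from `0` to `1`), so a pair charged `K p` times has total count
`N p` with `2 ^ K p ≤ 2 * N p + 1`. Since `x ↦ 2 ^ x` is convex,
`2 ^ (m / CA) ≤ (∑ p, 2 ^ K p) / CA ≤ (2 * T + CA) / CA ≤ 3 * T / CA`.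
-/

open Finset

-- The weaker invariant `2 ^ K ≤ 2 * N + 1` is not preserved by a doubling step.
theorem two_pow_card_doublings_le (u : ℕ → ℕ) {k : ℕ} (hk : 1 ≤ k) :
    2 ^ #{j ∈ Ico 1 k | u j = max 1 (∑ i ∈ Ico 1 j, u i)} ≤ max 1 (2 * ∑ j ∈ Ico 1 k, u j) := by
  induction k, hk using Nat.le_induction with
  | base => simp
  | succ k hk ih =>
    rw [card_filter, sum_Ico_succ_top hk, ← card_filter, sum_Ico_succ_top hk]
    split_ifs with hdoubling
    · rw [pow_succ]
      omega
    · rw [add_zero]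
      omega

theorem Finset.card_le_sum_card_filter {α β : Type*} [Fintype β] (s : Finset α)
    (P : α → β → Prop) [∀ j p, Decidable (P j p)] (h : ∀ j ∈ s, ∃ p, P j p) :
    #s ≤ ∑ p, #{j ∈ s | P j p} :=
  calc #s = ∑ j ∈ s, 1 := card_eq_sum_ones s
    _ ≤ ∑ j ∈ s, #{p | P j p} := sum_le_sum fun j hj ↦ by
      obtain ⟨p, hp⟩ := h j hj
      exact card_pos.2 ⟨p, by simpa using hp⟩
    _ = ∑ p, #{j ∈ s | P j p} := by simp only [card_filter]; exact sum_comm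

theorem Real.rpow_sum_div_card_le {ι : Type*} {s : Finset ι} (hs : s.Nonempty) {b : ℝ}
    (hb : 0 < b) (x : ι → ℝ) : b ^ ((∑ i ∈ s, x i) / #s) ≤ (∑ i ∈ s, b ^ x i) / #s := by
  have hcard : (0 : ℝ) < #s := by exact_mod_cast hs.card_pos
  have := (convexOn_rpow_left hb).map_sum_le (t := s) (w := fun _ ↦ (#s : ℝ)⁻¹) (p := x)
    (fun _ _ ↦ by positivity) (by simp [hcard.ne']) (fun _ _ ↦ Set.mem_univ _)
  simp only [smul_eq_mul] at this
  rwa [← mul_sum, ← mul_sum, inv_mul_eq_div, inv_mul_eq_div] at this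

theorem stmt_17 (CA T m : ℕ) (hCA : 1 ≤ CA) (hT : CA ≤ T)
    (v : ℕ → Fin CA → ℕ) (n : ℕ → Fin CA → ℕ)
    (hn : ∀ k p, n k p = max 1 (∑ j ∈ Finset.Ico 1 k, v j p))
    (hstop : ∀ k ∈ Finset.Icc 1 m, (∀ p, v k p ≤ n k p) ∧ ∃ p, v k p = n k p)
    (htotal : ∑ k ∈ Finset.Icc 1 m, ∑ p, v k p ≤ T) :
    (m : ℝ) ≤ CA * Real.logb 2 (8 * T / CA) := by
  set K : Fin CA → ℕ := fun p ↦ #{j ∈ Icc 1 m | v j p = n j p}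
  have hm : m ≤ ∑ p, K p := by
    simpa using card_le_sum_card_filter (Icc 1 m) _ fun j hj ↦ (hstop j hj).2
  have hK : ∀ p, 2 ^ K p ≤ 2 * ∑ j ∈ Icc 1 m, v j p + 1 := fun p ↦ by
    have := two_pow_card_doublings_le (v · p) (Nat.le_add_left 1 m)
    simp only [Ico_add_one_right_eq_Icc, ← hn] at this
    exact this.trans (by omega)
  have hsum : ∑ p, (2 * ∑ j ∈ Icc 1 m, v j p + 1) ≤ 3 * T := by
    rw [sum_add_distrib, ← mul_sum, sum_comm]
    simp only [sum_const, card_univ, Fintype.card_fin, smul_eq_mul, mul_one]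
    omega
  have hCA' : (0 : ℝ) < CA := by exact_mod_cast hCA
  have hT' : (0 : ℝ) < T := by exact_mod_cast hCA.trans hT
  rw [← div_le_iff₀' hCA', Real.le_logb_iff_rpow_le one_lt_two (by positivity)]
  calc (2 : ℝ) ^ ((m : ℝ) / CA)
      ≤ 2 ^ ((∑ p, (K p : ℝ)) / CA) :=
        Real.rpow_le_rpow_of_exponent_le one_le_two (by gcongr; exact_mod_cast hm)
    _ ≤ (∑ p, (2 : ℝ) ^ (K p : ℝ)) / CA := by
        simpa using Real.rpow_sum_div_card_le (univ_nonempty_iff.2 ⟨⟨0, hCA⟩⟩) two_pos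
          (K · : Fin CA → ℝ)
    _ ≤ 3 * T / CA := by
        simp only [Real.rpow_natCast]
        gcongr
        exact_mod_cast (sum_le_sum fun p _ ↦ hK p).trans hsum
    _ ≤ 8 * T / CA := by gcongr; norm_num
end

section
/- The aperiodicity transformation preserves fixed points of the average-reward optimality operator: if u satisfies u(x) = max_a { r(x,a) + ∑_y p(y|x,a) u(y) } - ρ for all x (for a scalar ρ), then u also satisfies u(x) = max_a { r(x,a) + τ·∑_y p(y|x,a) u(y) + (1-τ)·u(x) } - τ·ρ for any τ ∈ (0,1], and conversely. -/
theorem stmt_19 {X A : Type*} [Fintype X] [Nonempty X] [Fintype A] [Nonempty A]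
    [DecidableEq X]
    (r : X → A → ℝ) (p : X → A → X → ℝ)
    (hp : ∀ x a, (∀ y, 0 ≤ p x a y) ∧ ∑ y, p x a y = 1)
    (ρ : ℝ) (u : X → ℝ) (τ : ℝ) (hτ0 : 0 < τ) (hτ1 : τ ≤ 1) :
    (∀ x, u x + ρ * τ =
        Finset.univ.sup' Finset.univ_nonempty (fun a =>
          τ * r x a + ∑ y, (τ * p x a y + (1 - τ) * (if y = x then 1 else 0)) * u y))
    ↔ (∀ x, u x + ρ =
        Finset.univ.sup' Finset.univ_nonempty (fun a =>
          r x a + ∑ y, p x a y * u y)) := by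
  have key : ∀ x : X,
      (Finset.univ.sup' Finset.univ_nonempty (fun a =>
          τ * r x a + ∑ y, (τ * p x a y + (1 - τ) * (if y = x then 1 else 0)) * u y))
      = τ * (Finset.univ.sup' Finset.univ_nonempty (fun a =>
          r x a + ∑ y, p x a y * u y)) + (1 - τ) * u x := by
    intro x
    have hg : ∀ s t : ℝ, τ * (max s t) + (1 - τ) * u x
        = max (τ * s + (1 - τ) * u x) (τ * t + (1 - τ) * u x) := by
      intro s t
      rcases le_total s t with h | h
      · rw [max_eq_right h, max_eq_right]
        nlinarith
      · rw [max_eq_left h, max_eq_left]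
        nlinarith
    have := Finset.comp_sup'_eq_sup'_comp (s := (Finset.univ : Finset A))
      Finset.univ_nonempty (f := fun a => r x a + ∑ y, p x a y * u y)
      (g := fun t => τ * t + (1 - τ) * u x) hg
    simp only [Function.comp_def] at this
    rw [this]
    congr 1
    funext a
    have hsum : ∑ y, (τ * p x a y + (1 - τ) * (if y = x then 1 else 0)) * u y
        = τ * (∑ y, p x a y * u y) + (1 - τ) * u x := by
      simp [add_mul, Finset.sum_add_distrib, mul_assoc, ← Finset.mul_sum,
        ite_mul, mul_ite]
    rw [hsum]; ring
  constructor
  · intro h x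
    have := h x
    rw [key x] at this
    have : τ * (u x + ρ) = τ * (Finset.univ.sup' Finset.univ_nonempty (fun a =>
          r x a + ∑ y, p x a y * u y)) := by linarith
    exact mul_left_cancel₀ (ne_of_gt hτ0) this
  · intro h x
    rw [key x, ← h x]; ring
end
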